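/- If S is an exponentially independent set of vertices of the infinite cubic tree T_∞, then for every vertex u in S there exists a vertex v in S with f(v,S) ≥ 2·f(u,S). -/

import Mathlib

open SimpleGraph
open scoped Classical ENNReal

/-- The graph obtained from `G` by deleting the vertices of `A`
(they are kept as isolated vertices, which does not affect adjacency or distances
among the remaining vertices). -/
def SimpleGraph.deleteSet {V : Type*} (G : SimpleGraph V) (A : Set V) : SimpleGraph V where
  Adj x y := G.Adj x y ∧ x ∉ A ∧ y ∉ A
  symm := ⟨fun _ _ ⟨h, hx, hy⟩ => ⟨h.symm, hy, hx⟩⟩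
  loopless := ⟨fun x ⟨h, _, _⟩ => G.loopless.irrefl x h⟩

/-- `dist_{(G,S)}(u,v)`: the distance between `u` and `v` in `G - (S \ {u,v})`,
with value `⊤` if there is no path between `u` and `v` in that graph. -/
noncomputable def distDel {V : Type*} (G : SimpleGraph V) (S : Set V) (u v : V) : ℕ∞ :=
  (G.deleteSet (S \ {u, v})).edist u v

/-- `w_{(G,S)}(u) = Σ_{v ∈ S} (1/2)^{dist_{(G,S)}(u,v) - 1}`, a sum with values in `[0,∞]`
in which a summand with infinite distance equals `0`. -/
noncomputable def expWSet {V : Type*} (G : SimpleGraph V) (S : Set V) (u : V) : ℝ≥0∞ :=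
  ∑' v : S, if distDel G S u (v : V) = ⊤ then 0
    else 2 * (2⁻¹ : ℝ≥0∞) ^ (distDel G S u (v : V)).toNat

/-- `S` is exponentially independent in `G`: `w_{(G,S∖{u})}(u) < 1` for every `u ∈ S`. -/
def ExpIndepSet {V : Type*} (G : SimpleGraph V) (S : Set V) : Prop :=
  ∀ u ∈ S, expWSet G (S \ {u}) u < 1

/-- `G` is an infinite cubic tree: a connected acyclic graph on a countably infinite
vertex set in which every vertex has degree `3`. -/
def IsInfCubicTree {V : Type*} (G : SimpleGraph V) : Prop :=
  Countable V ∧ Infinite V ∧ G.Connected ∧ G.IsAcyclic ∧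
    ∀ v : V, (G.neighborSet v).encard = 3

/-- `f(u,S) = limsup_{k→∞} |S ∩ B^k(u)| / |B^k(u)|`, where `B^k(u)` is the ball of
radius `k` around `u`, of cardinality `3·2^k - 2` in the infinite cubic tree. -/
noncomputable def ballDensity {V : Type*} (G : SimpleGraph V) (S : Set V) (u : V) : ℝ :=
  Filter.limsup (fun k : ℕ =>
    ((S ∩ {v : V | G.edist u v ≤ (k : ℕ∞)}).ncard : ℝ) / (3 * 2 ^ k - 2)) Filter.atTop

/-!
Fix `u ∈ S` and give each `v ∈ S \ {u}` at finite distance `j v` from `u` in the graph with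
`S \ {u, v}` deleted the weight `2 ^ (-j v)`; exponential independence at `u` says that twice the
total weight is `< 1`. A vertex `x ≠ u` of `S` in the ball `B^k(u)` lies in `B^(k - j v)(v)`, where
`v` is the first vertex of `S` after `u` on a geodesic to `x`. Since `|B^(k - j)| ≤ 2 ^ (-j) |B^k|`,
the density ratios satisfy `ratio_u(k) ≤ |B^k|⁻¹ + ∑ v, 2 ^ (-j v) ratio_v(k - j v)`, and a reverse
Fatou argument for the dominated series gives `f(u) ≤ ∑ v, 2 ^ (-j v) f(v)`. If every `v ∈ S` had
`f(v) < 2 f(u)`, then `f(u) > 0` and `f(u) ≤ 2 f(u) ∑ v, 2 ^ (-j v) < f(u)`.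
-/

open Filter Topology

theorem limsup_mem_Icc_zero_one {α : Type*} {l : Filter α} [l.NeBot] {b : α → ℝ}
    (h0 : ∀ a, 0 ≤ b a) (h1 : ∀ a, b a ≤ 1) : limsup b l ∈ Set.Icc 0 1 :=
  ⟨le_limsup_of_frequently_le (.of_forall h0) (isBoundedUnder_of ⟨1, h1⟩),
    limsup_le_of_le (isCoboundedUnder_le_of_le l h0) (.of_forall h1)⟩

theorem eventually_tsum_mul_le_tsum_mul_limsup_add {α ι : Type*} {l : Filter α} [l.NeBot]
    {w : ι → ℝ} {b : ι → α → ℝ} (hw : Summable w) (hw0 : ∀ i, 0 ≤ w i)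
    (hb0 : ∀ i a, 0 ≤ b i a) (hb1 : ∀ i a, b i a ≤ 1) {ε : ℝ} (hε : 0 < ε) :
    ∀ᶠ a in l, ∑' i, w i * b i a ≤ ∑' i, w i * limsup (b i) l + ε := by
  set L := fun i => limsup (b i) l
  have hbdd i : IsBoundedUnder (· ≤ ·) l (b i) := isBoundedUnder_of ⟨1, hb1 i⟩
  have hL0 i : 0 ≤ L i := (limsup_mem_Icc_zero_one (hb0 i) (hb1 i)).1
  have hL1 i : L i ≤ 1 := (limsup_mem_Icc_zero_one (hb0 i) (hb1 i)).2
  have hwb_le {c : ι → ℝ} (hc1 : ∀ i, c i ≤ 1) i : w i * c i ≤ w i :=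
    mul_le_of_le_one_right (hw0 i) (hc1 i)
  have hwL : Summable fun i => w i * L i :=
    hw.of_nonneg_of_le (fun i => mul_nonneg (hw0 i) (hL0 i)) (hwb_le hL1)
  set W := ∑' i, w i
  have hW : 0 ≤ W := tsum_nonneg hw0
  set δ := ε / (W + 1)
  have hδ : 0 < δ := div_pos hε (by linarith)
  obtain ⟨s, hs⟩ : ∃ s : Finset ι, ∑' i : {i // i ∉ s}, w i < δ :=
    ((tendsto_order.1 (tendsto_tsum_compl_atTop_zero w)).2 δ hδ).exists
  have hev : ∀ᶠ a in l, ∀ i ∈ s, b i a < L i + δ :=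
    (eventually_all_finset s).2 fun i _ => eventually_lt_of_limsup_lt (by linarith) (hbdd i)
  filter_upwards [hev] with a ha
  have hwb : Summable fun i => w i * b i a :=
    hw.of_nonneg_of_le (fun i => mul_nonneg (hw0 i) (hb0 i a)) (hwb_le (hb1 · a))
  have hhead : ∑ i ∈ s, w i * b i a ≤ ∑ i ∈ s, w i * L i + δ * W := by
    rw [← sub_le_iff_le_add', ← Finset.sum_sub_distrib]
    calc ∑ i ∈ s, (w i * b i a - w i * L i) ≤ ∑ i ∈ s, δ * w i :=
          Finset.sum_le_sum fun i hi => by nlinarith [hw0 i, ha i hi]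
      _ ≤ δ * W := by
          rw [← Finset.mul_sum]
          exact mul_le_mul_of_nonneg_left (hw.sum_le_tsum s fun i _ => hw0 i) hδ.le
  have htail : ∑' i : {i // i ∉ s}, w i * b i a ≤ δ :=
    (Summable.tsum_le_tsum (fun i : {i // i ∉ s} => hwb_le (hb1 · a) i) (hwb.subtype _)
      (hw.subtype _)).trans hs.le
  calc ∑' i, w i * b i a
      = ∑ i ∈ s, w i * b i a + ∑' i : {i // i ∉ s}, w i * b i a :=
        hwb.sum_add_tsum_compl.symm
    _ ≤ ∑' i, w i * L i + δ * W + δ := by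
        linarith [hwL.sum_le_tsum s fun i _ => mul_nonneg (hw0 i) (hL0 i)]
    _ = ∑' i, w i * L i + ε := by
        rw [add_assoc, ← mul_add_one, div_mul_cancel₀ _ (by linarith)]

namespace SimpleGraph

variable {V : Type*} {G : SimpleGraph V} {u v x : V}

def closedBall (G : SimpleGraph V) (u : V) (k : ℕ) : Set V := {v | G.edist u v ≤ k}

theorem Connected.mem_closedBall_iff (hc : G.Connected) {k : ℕ} :
    v ∈ G.closedBall u k ↔ G.dist u v ≤ k := by
  change G.edist u v ≤ k ↔ _
  rw [← (hc u v).coe_dist_eq_edist, Nat.cast_le]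

theorem Connected.exists_adj_dist_eq (hc : G.Connected) {m : ℕ} (h : G.dist u x = m + 1) :
    ∃ y, G.Adj y x ∧ G.dist u y = m := by
  obtain ⟨p, hp⟩ := hc.exists_walk_length_eq_dist u x
  have hxu : x ≠ u := by rintro rfl; simp at h
  obtain ⟨y, hxy, r, hr⟩ := p.reverse.exists_eq_cons_of_ne hxu
  have hlen : r.length = m := by
    have := congrArg Walk.length hr
    simp only [Walk.length_reverse, Walk.length_cons] at this
    omega
  refine ⟨y, hxy.symm, le_antisymm ((dist_le r.reverse).trans_eq (by simp [hlen])) ?_⟩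
  have := hc.dist_triangle (u := u) (v := y) (w := x)
  rw [dist_eq_one_iff_adj.2 hxy.symm] at this
  omega

theorem Connected.ncard_neighbors_farther_le (hc : G.Connected)
    (hdeg : ∀ v, (G.neighborSet v).encard ≤ 3) (y : V) :
    {x ∈ G.neighborSet y | G.dist u x = G.dist u y + 1}.ncard ≤ 2 + if y = u then 1 else 0 := by
  obtain ⟨hfin, h3⟩ := Set.encard_le_coe_iff_finite_ncard_le (k := 3).1 (hdeg y)
  split_ifs with hyu
  · exact (Set.ncard_le_ncard (Set.sep_subset _ _) hfin).trans h3
  obtain ⟨m, hm⟩ : ∃ m, G.dist u y = m + 1 :=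
    Nat.exists_eq_succ_of_ne_zero ((hc.dist_eq_zero_iff).not.2 (Ne.symm hyu))
  obtain ⟨p, hpy, hp⟩ := hc.exists_adj_dist_eq hm
  set C := {x ∈ G.neighborSet y | G.dist u x = G.dist u y + 1}
  have hp_notMem : p ∉ C := by
    rintro ⟨-, hpd⟩
    omega
  have hsub : insert p C ⊆ G.neighborSet y := Set.insert_subset hpy.symm (Set.sep_subset _ _)
  have := Set.ncard_insert_of_notMem hp_notMem (hfin.subset (Set.sep_subset _ _))
  have := Set.ncard_le_ncard hsub hfin
  omega

theorem Connected.closedBall_finite_and_ncard_add_two_le (hc : G.Connected)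
    (hdeg : ∀ v, (G.neighborSet v).encard ≤ 3) (u : V) (k : ℕ) :
    (G.closedBall u k).Finite ∧ (G.closedBall u k).ncard + 2 ≤ 3 * 2 ^ k := by
  induction k with
  | zero =>
    have : G.closedBall u 0 = {u} := by
      ext v
      rw [hc.mem_closedBall_iff, Nat.le_zero, hc.dist_eq_zero_iff, Set.mem_singleton_iff, eq_comm]
    simp [this]
  | succ k ih =>
    obtain ⟨hfin, hcard⟩ := ih
    set children := fun y => {x ∈ G.neighborSet y | G.dist u x = G.dist u y + 1}
    have hcover : G.closedBall u (k + 1) ⊆ insert u (⋃ y ∈ hfin.toFinset, children y) := by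
      intro x hx
      rw [hc.mem_closedBall_iff] at hx
      obtain hxu | hxu := eq_or_ne x u
      · exact .inl hxu
      obtain ⟨m, hm⟩ : ∃ m, G.dist u x = m + 1 :=
        Nat.exists_eq_succ_of_ne_zero ((hc.dist_eq_zero_iff).not.2 (Ne.symm hxu))
      obtain ⟨y, hyx, hy⟩ := hc.exists_adj_dist_eq hm
      refine .inr (Set.mem_biUnion (x := y) ?_ ⟨hyx, by omega⟩)
      rw [Finset.mem_coe, Set.Finite.mem_toFinset, hc.mem_closedBall_iff]
      omega
    have hfin' : (insert u (⋃ y ∈ hfin.toFinset, children y)).Finite :=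
      (hfin.toFinset.finite_toSet.biUnion fun y _ =>
        (Set.encard_le_coe_iff_finite_ncard_le.1 (hdeg y)).1.subset (Set.sep_subset _ _)).insert u
    have hsum :
        ∑ y ∈ hfin.toFinset, (children y).ncard ≤ 2 * (G.closedBall u k).ncard + 1 := by
      calc ∑ y ∈ hfin.toFinset, (children y).ncard
          ≤ ∑ y ∈ hfin.toFinset, (2 + if y = u then 1 else 0) :=
            Finset.sum_le_sum fun y _ => hc.ncard_neighbors_farther_le hdeg y
        _ ≤ 2 * (G.closedBall u k).ncard + 1 := by
            rw [Finset.sum_add_distrib, Finset.sum_const, smul_eq_mul, Finset.sum_ite_eq',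
              ← Set.ncard_eq_toFinset_card _ hfin]
            split_ifs <;> omega
    refine ⟨hfin'.subset hcover, ?_⟩
    have := (Set.ncard_le_ncard hcover hfin').trans (Set.ncard_insert_le _ _)
    have := hfin.toFinset.set_ncard_biUnion_le children
    rw [pow_succ]
    omega

theorem Walk.exists_prefix_to_first_mem {S : Set V} {b : V} (p : G.Walk b x) (hx : x ∈ S) :
    ∃ v ∈ S, ∃ (q : G.Walk b v) (r : G.Walk v x),
      q.length + r.length = p.length ∧ ∀ y ∈ q.support, y ∈ S → y = v := by
  induction p with
  | nil => exact ⟨_, hx, .nil, .nil, rfl, by simp⟩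
  | @cons b c x h p ih =>
    by_cases hb : b ∈ S
    · exact ⟨b, hb, .nil, .cons h p, by simp, by simp⟩
    obtain ⟨v, hv, q, r, hlen, hfirst⟩ := ih hx
    refine ⟨v, hv, .cons h q, r, by simp [← hlen]; omega, ?_⟩
    simp only [Walk.support_cons, List.mem_cons, forall_eq_or_imp]
    exact ⟨fun h => absurd h hb, hfirst⟩

theorem edist_deleteSet_le_length {A : Set V} (p : G.Walk u v) (hp : ∀ y ∈ p.support, y ∉ A) :
    (G.deleteSet A).edist u v ≤ p.length := by
  induction p with
  | nil => simp
  | @cons a b c h p ih =>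
    simp only [Walk.support_cons, List.mem_cons, forall_eq_or_imp] at hp
    have hadj : (G.deleteSet A).Adj a b := ⟨h, hp.1, hp.2 _ p.start_mem_support⟩
    calc (G.deleteSet A).edist a c ≤ (G.deleteSet A).edist a b + (G.deleteSet A).edist b c :=
          SimpleGraph.edist_triangle
      _ ≤ 1 + p.length := by
          rw [edist_eq_one_iff_adj.2 hadj]
          gcongr
          exact ih hp.2
      _ = (Walk.cons h p).length := by simp [add_comm]

theorem edist_le_distDel (T : Set V) : G.edist u v ≤ distDel G T u v :=
  edist_anti fun _ _ h => h.1

theorem Connected.exists_distDel_add_dist_le {S : Set V} (hc : G.Connected) (hx : x ∈ S)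
    (hxu : x ≠ u) : ∃ v ∈ S \ {u}, ∃ n : ℕ,
      distDel G (S \ {u}) u v = n ∧ n + G.dist v x ≤ G.dist u x := by
  obtain ⟨p, hp⟩ := hc.exists_walk_length_eq_dist u x
  cases p with
  | nil => exact absurd rfl hxu
  | @cons _ b _ h p =>
    obtain ⟨v, hv, q, r, hlen, hfirst⟩ := p.exists_prefix_to_first_mem hx
    have hdist : G.dist v x ≤ r.length := dist_le r
    have hvu : v ≠ u := by
      rintro rfl
      simp only [Walk.length_cons] at hp
      omega
    have hdel : distDel G (S \ {u}) u v ≤ (Walk.cons h q).length := by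
      refine edist_deleteSet_le_length _ fun y hy hyA => hyA.2 ?_
      simp only [Walk.support_cons, List.mem_cons] at hy
      obtain rfl | hy := hy
      · simp
      · simp [hfirst y hy hyA.1.1]
    obtain ⟨n, hn⟩ :=
      ENat.ne_top_iff_exists.1 (ne_top_of_le_ne_top (ENat.natCast_ne_top _) hdel)
    rw [← hn, Nat.cast_le, Walk.length_cons] at hdel
    simp only [Walk.length_cons] at hp
    exact ⟨v, ⟨hv, hvu⟩, n, hn.symm, by omega⟩

theorem Connected.inter_closedBall_subset (hc : G.Connected) (S : Set V) (u : V) (k : ℕ) :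
    S ∩ G.closedBall u k ⊆ insert u (⋃ v ∈ {v ∈ S \ {u} | distDel G (S \ {u}) u v ≤ k},
      S ∩ G.closedBall v (k - (distDel G (S \ {u}) u v).toNat)) := by
  rintro x ⟨hxS, hxB⟩
  obtain rfl | hxu := eq_or_ne x u
  · exact .inl rfl
  obtain ⟨v, hv, n, hn, hle⟩ := hc.exists_distDel_add_dist_le hxS hxu
  rw [hc.mem_closedBall_iff] at hxB
  refine .inr (Set.mem_biUnion (x := v) ⟨hv, ?_⟩ ⟨hxS, ?_⟩)
  · rw [hn, Nat.cast_le]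
    omega
  · rw [hc.mem_closedBall_iff, hn, ENat.toNat_natCast]
    omega

end SimpleGraph

section Density

variable {V : Type*} {G : SimpleGraph V} {S T : Set V} {u v : V}

noncomputable def visibleWeight (G : SimpleGraph V) (T : Set V) (u v : V) : ℝ :=
  if v ∈ T ∧ distDel G T u v ≠ ⊤ then 2⁻¹ ^ (distDel G T u v).toNat else 0

theorem visibleWeight_nonneg : 0 ≤ visibleWeight G T u v := by
  unfold visibleWeight
  split_ifs <;> positivity

theorem visibleWeight_of_notMem (hv : v ∉ T) : visibleWeight G T u v = 0 :=
  if_neg fun h => hv h.1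

theorem expWSet_eq_tsum_visibleWeight :
    expWSet G T u = ∑' v, 2 * ENNReal.ofReal (visibleWeight G T u v) := by
  rw [expWSet, tsum_subtype T fun v =>
    if distDel G T u v = ⊤ then 0 else 2 * (2⁻¹ : ℝ≥0∞) ^ (distDel G T u v).toNat]
  congr 1
  ext v
  by_cases hv : v ∈ T <;> by_cases hd : distDel G T u v = ⊤ <;>
    simp [visibleWeight, hv, hd, ENNReal.ofReal_pow, ENNReal.ofReal_inv_of_pos, ENNReal.inv_pow]

theorem summable_visibleWeight_and_two_mul_tsum_lt_one (h : expWSet G T u < 1) :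
    Summable (visibleWeight G T u) ∧ 2 * ∑' v, visibleWeight G T u v < 1 := by
  rw [expWSet_eq_tsum_visibleWeight, ENNReal.tsum_mul_left] at h
  have hne : ∑' v, ENNReal.ofReal (visibleWeight G T u v) ≠ ⊤ :=
    ne_top_of_le_ne_top ENNReal.one_ne_top ((le_mul_of_one_le_left' one_le_two).trans h.le)
  have hsum : Summable (visibleWeight G T u) := by
    simpa [ENNReal.toReal_ofReal visibleWeight_nonneg] using ENNReal.summable_toReal hne
  refine ⟨hsum, ?_⟩
  rwa [← ENNReal.ofReal_tsum_of_nonneg (fun _ => visibleWeight_nonneg) hsum,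
    ← ENNReal.ofReal_ofNat 2, ← ENNReal.ofReal_mul zero_le_two, ENNReal.ofReal_lt_one] at h

noncomputable def ballRatio (G : SimpleGraph V) (S : Set V) (u : V) (k : ℕ) : ℝ :=
  ((S ∩ G.closedBall u k).ncard : ℝ) / (3 * 2 ^ k - 2)

theorem three_mul_two_pow_sub_two_pos (k : ℕ) : (0 : ℝ) < 3 * 2 ^ k - 2 := by
  linarith [one_le_pow₀ (n := k) (one_le_two (α := ℝ))]

theorem three_mul_two_pow_sub_le {j k : ℕ} (h : j ≤ k) :
    (3 * 2 ^ (k - j) - 2 : ℝ) ≤ 2⁻¹ ^ j * (3 * 2 ^ k - 2) := by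
  have hj : (2⁻¹ : ℝ) ^ j ≤ 1 := pow_le_one₀ (by norm_num) (by norm_num)
  calc (3 * 2 ^ (k - j) - 2 : ℝ) ≤ 3 * 2 ^ (k - j) - 2 * 2⁻¹ ^ j := by linarith
    _ = 2⁻¹ ^ j * (3 * 2 ^ k - 2) := by
        rw [← Nat.sub_add_cancel h, pow_add, Nat.add_sub_cancel, inv_pow]
        field_simp

theorem ballRatio_nonneg (k : ℕ) : 0 ≤ ballRatio G S u k :=
  div_nonneg (Nat.cast_nonneg _) (three_mul_two_pow_sub_two_pos k).le

theorem ballRatio_le_one (hc : G.Connected) (hdeg : ∀ v, (G.neighborSet v).encard ≤ 3)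
    (k : ℕ) : ballRatio G S u k ≤ 1 := by
  obtain ⟨hfin, hcard⟩ := hc.closedBall_finite_and_ncard_add_two_le hdeg u k
  rw [ballRatio, div_le_one (three_mul_two_pow_sub_two_pos k)]
  have := Set.ncard_le_ncard (Set.inter_subset_right : S ∩ G.closedBall u k ⊆ _) hfin
  have : ((S ∩ G.closedBall u k).ncard : ℝ) + 2 ≤ 3 * 2 ^ k := by exact_mod_cast (by omega)
  linarith

theorem ballRatio_le_add_tsum (hc : G.Connected) (hdeg : ∀ v, (G.neighborSet v).encard ≤ 3)
    (hw : Summable (visibleWeight G (S \ {u}) u)) (k : ℕ) :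
    ballRatio G S u k ≤ (3 * 2 ^ k - 2)⁻¹ + ∑' v, visibleWeight G (S \ {u}) u v *
      ballRatio G S v (k - (distDel G (S \ {u}) u v).toNat) := by
  set D : ℕ → ℝ := fun k => 3 * 2 ^ k - 2
  set j := fun v => (distDel G (S \ {u}) u v).toNat
  set term := fun v => visibleWeight G (S \ {u}) u v * ballRatio G S v (k - j v)
  set I := {v ∈ S \ {u} | distDel G (S \ {u}) u v ≤ k}
  have hball v m := (hc.closedBall_finite_and_ncard_add_two_le hdeg v m).1
  have hI : I.Finite := (hball u k).subset fun v hv => (edist_le_distDel _).trans hv.2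
  have hpiece :
      ∀ v ∈ hI.toFinset, ((S ∩ G.closedBall v (k - j v)).ncard : ℝ) ≤ D k * term v := by
    intro v hv
    rw [Set.Finite.mem_toFinset] at hv
    have hne : distDel G (S \ {u}) u v ≠ ⊤ := ne_top_of_le_ne_top (ENat.natCast_ne_top k) hv.2
    have hjk : j v ≤ k := by
      rw [← ENat.natCast_le_natCast, ENat.natCast_toNat hne]
      exact hv.2
    calc ((S ∩ G.closedBall v (k - j v)).ncard : ℝ) = D (k - j v) * ballRatio G S v (k - j v) :=
          (mul_div_cancel₀ _ (three_mul_two_pow_sub_two_pos _).ne').symm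
      _ ≤ 2⁻¹ ^ j v * D k * ballRatio G S v (k - j v) :=
          mul_le_mul_of_nonneg_right (three_mul_two_pow_sub_le hjk) (ballRatio_nonneg _)
      _ = D k * term v := by
          simp only [term, visibleWeight, if_pos (And.intro hv.1 hne)]
          ring
  have hcount : ((S ∩ G.closedBall u k).ncard : ℝ) ≤
      1 + ∑ v ∈ hI.toFinset, ((S ∩ G.closedBall v (k - j v)).ncard : ℝ) := by
    have hU : ⋃ v ∈ I, S ∩ G.closedBall v (k - j v) =
        ⋃ v ∈ hI.toFinset, S ∩ G.closedBall v (k - j v) := by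
      simp only [Set.Finite.mem_toFinset]
    have hfin : (insert u (⋃ v ∈ I, S ∩ G.closedBall v (k - j v))).Finite :=
      (hI.biUnion fun v _ => (hball v _).inter_of_right S).insert u
    have := (Set.ncard_le_ncard (hc.inter_closedBall_subset S u k) hfin).trans
      (Set.ncard_insert_le _ _)
    rw [hU] at this
    have := hI.toFinset.set_ncard_biUnion_le fun v => S ∩ G.closedBall v (k - j v)
    exact_mod_cast (by omega)
  have hterm : Summable term := hw.of_nonneg_of_le
    (fun v => mul_nonneg visibleWeight_nonneg (ballRatio_nonneg _))
    (fun v => mul_le_of_le_one_right visibleWeight_nonneg (ballRatio_le_one hc hdeg _))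
  have hsum := hterm.sum_le_tsum hI.toFinset
    fun v _ => mul_nonneg visibleWeight_nonneg (ballRatio_nonneg _)
  rw [ballRatio, div_le_iff₀ (three_mul_two_pow_sub_two_pos k), add_mul,
    inv_mul_cancel₀ (three_mul_two_pow_sub_two_pos k).ne']
  calc ((S ∩ G.closedBall u k).ncard : ℝ) ≤ 1 + ∑ v ∈ hI.toFinset, D k * term v :=
        hcount.trans (add_le_add_right (Finset.sum_le_sum hpiece) 1)
    _ ≤ 1 + (∑' v, term v) * D k := by
        rw [← Finset.mul_sum, mul_comm]
        gcongr
        exact (three_mul_two_pow_sub_two_pos k).le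

theorem ballDensity_eq_limsup_ballRatio : ballDensity G S u = limsup (ballRatio G S u) atTop :=
  rfl

theorem ballDensity_le_mul_tsum (hc : G.Connected) (hdeg : ∀ v, (G.neighborSet v).encard ≤ 3)
    (hw : Summable (visibleWeight G (S \ {u}) u)) {c : ℝ}
    (hfc : ∀ v ∈ S \ {u}, ballDensity G S v ≤ c) :
    ballDensity G S u ≤ c * ∑' v, visibleWeight G (S \ {u}) u v := by
  set w := visibleWeight G (S \ {u}) u
  have hf_mem v : ballDensity G S v ∈ Set.Icc (0 : ℝ) 1 :=
    limsup_mem_Icc_zero_one ballRatio_nonneg (ballRatio_le_one hc hdeg)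
  have hshift v : limsup (fun k => ballRatio G S v (k - (distDel G (S \ {u}) u v).toNat)) atTop =
      ballDensity G S v := by
    change limsup (ballRatio G S v ∘ fun k => k - _) atTop = _
    rw [limsup_comp, map_sub_atTop_eq_nat]
    rfl
  have hwf : ∑' v, w v * ballDensity G S v ≤ c * ∑' v, w v := by
    rw [← tsum_mul_left]
    refine Summable.tsum_le_tsum (fun v => ?_)
      (hw.of_nonneg_of_le (fun v => mul_nonneg visibleWeight_nonneg (hf_mem v).1)
        (fun v => mul_le_of_le_one_right visibleWeight_nonneg (hf_mem v).2)) (hw.mul_left c)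
    by_cases hv : v ∈ S \ {u}
    · rw [mul_comm c]
      exact mul_le_mul_of_nonneg_left (hfc v hv) visibleWeight_nonneg
    · simp [w, visibleWeight_of_notMem hv]
  have hD : Tendsto (fun k : ℕ => (3 * 2 ^ k - 2 : ℝ)⁻¹) atTop (𝓝 0) :=
    (tendsto_atTop_mono (fun k => by linarith [one_le_pow₀ (n := k) (one_le_two (α := ℝ))])
      (tendsto_pow_atTop_atTop_of_one_lt one_lt_two)).inv_tendsto_atTop
  rw [ballDensity_eq_limsup_ballRatio]
  refine le_of_forall_pos_le_add fun ε hε =>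
    limsup_le_of_le (isCoboundedUnder_le_of_le atTop ballRatio_nonneg) ?_
  filter_upwards [eventually_tsum_mul_le_tsum_mul_limsup_add
    (b := fun v k => ballRatio G S v (k - (distDel G (S \ {u}) u v).toNat)) hw
    (fun _ => visibleWeight_nonneg) (fun _ _ => ballRatio_nonneg _)
    (fun _ _ => ballRatio_le_one hc hdeg _) (half_pos hε),
    (tendsto_order.1 hD).2 _ (half_pos hε)] with k h1 h2
  simp only [hshift] at h1
  linarith [ballRatio_le_add_tsum hc hdeg hw k]

end Density

/-- If `S` is an exponentially independent set of vertices of the infinite cubic tree,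
then for every vertex `u ∈ S` there is a vertex `v ∈ S` with `f(v,S) ≥ 2·f(u,S)`. -/
theorem stmt4 {V : Type*} (G : SimpleGraph V) (hG : IsInfCubicTree G)
    (S : Set V) (hS : ExpIndepSet G S) :
    ∀ u ∈ S, ∃ v ∈ S, 2 * ballDensity G S u ≤ ballDensity G S v := by
  obtain ⟨-, -, hc, -, hdeg⟩ := hG
  intro u hu
  by_contra! hlt
  obtain ⟨hw, hw1⟩ := summable_visibleWeight_and_two_mul_tsum_lt_one (hS u hu)
  have hpos : 0 < ballDensity G S u := by linarith [hlt u hu]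
  have := ballDensity_le_mul_tsum hc (fun v => (hdeg v).le) hw fun v hv => (hlt v hv.1).le
  nlinarith
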